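/- Let μ ∈ ℝ, σ > 0 and ξ ≠ 0, and let x be in the interior of the support D. Then the negative mixed second partial derivative of log f(x; μ,σ,ξ) with respect to μ and ξ equals (1/σ) · t(x)^{−2} · ((x−μ)/σ − 1) + (1/(σξ²)) · t(x)^{−1/ξ − 2} · ( t(x) · log t(x) − ξ(ξ+1)(x−μ)/σ ). -/

import Mathlib

open Real

/-- The Generalized Extreme-Value (GEV) density with shape `ξ ≠ 0`. -/
noncomputable def gevDensity (μ σ ξ x : ℝ) : ℝ :=
  if 0 < 1 + ξ * ((x - μ) / σ) then
    σ⁻¹ * (1 + ξ * ((x - μ) / σ)) ^ (-(ξ + 1) / ξ) *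
      Real.exp (-((1 + ξ * ((x - μ) / σ)) ^ (-1 / ξ)))
  else 0

/-!
On the support, `log f = -log σ - (1 + 1/ξ) log t - t^(-1/ξ)`, so the location score `∂/∂μ log f`
is an explicit function of the shape. Both the support condition and `ξ ≠ 0` are open in `ξ`,
so the `deriv` in the statement agrees with that explicit function on a neighbourhood of `ξ`,
and its `ξ`-derivative is computed by the chain rule for `t ^ (-1/ξ - 1)`.
-/

open Filter Topology

/-- The location score `∂/∂μ log f` written in the standardized variable `z = (x - μ) / σ`. -/
noncomputable def gevLocScore (σ ξ z : ℝ) : ℝ :=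
  (ξ + 1) / (σ * (1 + ξ * z)) - σ⁻¹ * (1 + ξ * z) ^ (-1 / ξ - 1)

section GEV

variable {μ σ ξ x : ℝ}

lemma log_gevDensity (hσ : σ ≠ 0) (ht : 0 < 1 + ξ * ((x - μ) / σ)) :
    Real.log (gevDensity μ σ ξ x) =
      -Real.log σ - (ξ + 1) / ξ * Real.log (1 + ξ * ((x - μ) / σ)) -
        (1 + ξ * ((x - μ) / σ)) ^ (-1 / ξ) := by
  rw [gevDensity, if_pos ht, Real.log_mul (mul_ne_zero (inv_ne_zero hσ) (by positivity))
    (Real.exp_ne_zero _), Real.log_mul (inv_ne_zero hσ) (by positivity), Real.log_exp,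
    Real.log_rpow ht, Real.log_inv]
  ring

lemma hasDerivAt_log_gevDensity_loc (hσ : σ ≠ 0) (hξ : ξ ≠ 0)
    (ht : 0 < 1 + ξ * ((x - μ) / σ)) :
    HasDerivAt (fun m => Real.log (gevDensity m σ ξ x)) (gevLocScore σ ξ ((x - μ) / σ)) μ := by
  set t : ℝ → ℝ := fun m => 1 + ξ * ((x - m) / σ)
  have ht_deriv : HasDerivAt t (ξ * (-1 / σ)) μ :=
    ((((hasDerivAt_id μ).const_sub x).div_const σ).const_mul ξ).const_add 1
  have h_log_eq : (fun m => Real.log (gevDensity m σ ξ x)) =ᶠ[𝓝 μ]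
      fun m => -Real.log σ - (ξ + 1) / ξ * Real.log (t m) - t m ^ (-1 / ξ) := by
    filter_upwards [(isOpen_lt continuous_const (by fun_prop : Continuous t)).mem_nhds ht]
      with m hm using log_gevDensity hσ hm
  refine HasDerivAt.congr_of_eventuallyEq ?_ h_log_eq
  refine ((((ht_deriv.log ht.ne').const_mul ((ξ + 1) / ξ)).const_sub (-Real.log σ)).sub
    (ht_deriv.rpow_const (p := -1 / ξ) (Or.inl ht.ne'))).congr_deriv ?_
  change _ = (ξ + 1) / (σ * t μ) - σ⁻¹ * t μ ^ (-1 / ξ - 1)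
  have ht_ne : t μ ≠ 0 := ht.ne'
  generalize t μ ^ (-1 / ξ - 1) = A
  field_simp

end GEV

lemma hasDerivAt_gevLocScore_shape {σ ξ z : ℝ} (hσ : σ ≠ 0) (hξ : ξ ≠ 0) (ht : 0 < 1 + ξ * z) :
    HasDerivAt (fun s => gevLocScore σ s z)
      (-((1 / σ) * ((1 + ξ * z)⁻¹) ^ 2 * (z - 1) +
        (1 / (σ * ξ ^ 2)) * (1 + ξ * z) ^ (-1 / ξ - 2) *
          ((1 + ξ * z) * Real.log (1 + ξ * z) - ξ * (ξ + 1) * z))) ξ := by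
  have h_lin : HasDerivAt (fun s => 1 + s * z) z ξ := by
    simpa using ((hasDerivAt_id ξ).mul_const z).const_add 1
  have h_exp : HasDerivAt (fun s => -1 / s - 1) ((ξ ^ 2)⁻¹) ξ := by
    simpa [neg_div] using ((hasDerivAt_inv hξ).neg).sub_const 1
  have h_ratio := ((hasDerivAt_id' ξ).add_const 1).div (h_lin.const_mul σ)
    (mul_ne_zero hσ ht.ne')
  have h_pow := (h_lin.rpow h_exp ht).const_mul σ⁻¹
  refine (h_ratio.sub h_pow).congr_deriv ?_
  have h_exponent : (1 + ξ * z) ^ (-1 / ξ - 1) = (1 + ξ * z) ^ (-1 / ξ - 2) * (1 + ξ * z) := by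
    rw [← rpow_add_one ht.ne']
    ring_nf
  rw [h_exponent, show -1 / ξ - 1 - 1 = -1 / ξ - 2 by ring]
  have ht_ne := ht.ne'
  generalize (1 + ξ * z) ^ (-1 / ξ - 2) = A
  field_simp
  ring

/-- The negative mixed second partial derivative of `log f(x; μ,σ,ξ)` with respect to `μ`
and `ξ` equals
`(1/σ) t(x)⁻² ((x-μ)/σ - 1) + (1/(σξ²)) t(x)^{-1/ξ-2} (t(x) log t(x) - ξ(ξ+1)(x-μ)/σ)`:
i.e. the derivative in `ξ` of `s ↦ ∂/∂μ log f(x; μ,σ,s)` equals the negative of that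
quantity. -/
theorem stmt_7 (μ σ ξ x : ℝ) (hσ : 0 < σ) (hξ : ξ ≠ 0)
    (hx : 0 < 1 + ξ * ((x - μ) / σ)) :
    HasDerivAt (fun s : ℝ => deriv (fun m : ℝ => Real.log (gevDensity m σ s x)) μ)
      (-((1 / σ) * ((1 + ξ * ((x - μ) / σ))⁻¹) ^ 2 * ((x - μ) / σ - 1) +
        (1 / (σ * ξ ^ 2)) * (1 + ξ * ((x - μ) / σ)) ^ (-1 / ξ - 2) *
          ((1 + ξ * ((x - μ) / σ)) * Real.log (1 + ξ * ((x - μ) / σ)) -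
            ξ * (ξ + 1) * ((x - μ) / σ)))) ξ := by
  have h_score : (fun s => deriv (fun m => Real.log (gevDensity m σ s x)) μ) =ᶠ[𝓝 ξ]
      fun s => gevLocScore σ s ((x - μ) / σ) := by
    have h_support : ∀ᶠ s in 𝓝 ξ, 0 < 1 + s * ((x - μ) / σ) :=
      (isOpen_lt continuous_const (by fun_prop)).mem_nhds hx
    filter_upwards [h_support, isOpen_ne.mem_nhds hξ] with s hs hs0
    exact (hasDerivAt_log_gevDensity_loc hσ.ne' hs0 hs).deriv
  exact (hasDerivAt_gevLocScore_shape hσ.ne' hξ hx).congr_of_eventuallyEq h_score
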